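/- arXiv:1603.00542 — 2 statements merged into one kernel-verified Lean document; each statement's English description precedes it below -/
import Mathlib

section
/- Let f : ℕ → O → A be the committed state of a multi-version database over logical time, and let p : O → A → Prop be a predicate (a data selection criterion over objects and their values); the result-set of p at timestamp t is the set {o | p o (f t o)}. Suppose m ≤ n and for every step k with m ≤ k < n and every object o whose committed value changes at step k (f k o ≠ f (k+1) o), the predicate matches neither the before-image nor the after-image of that version: ¬ p o (f k o) and ¬ p o (f (k+1) o). Then {o | p o (f m o)} = {o | p o (f n o)}, i.e., the predicate is valid at timestamp n: its result-set is the same as if the transaction had started at n instead of m. (This is Proposition 2: a predicate belonging to a transaction with start timestamp S is valid at timestamp C if no version committed between S and C matches the predicate.) -/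
/-- Proposition 2: a predicate with start timestamp `m` is valid at timestamp `n`
if no version committed between `m` and `n` matches the predicate. -/
theorem predicate_valid_of_no_match {O A : Type*}
    (f : ℕ → O → A) (p : O → A → Prop) (m n : ℕ) (hmn : m ≤ n)
    (hnomatch : ∀ k o, m ≤ k → k < n → f k o ≠ f (k + 1) o →
      ¬ p o (f k o) ∧ ¬ p o (f (k + 1) o)) :
    {o | p o (f m o)} = {o | p o (f n o)} := by
  induction n with
  | zero =>
    have : m = 0 := Nat.le_zero.mp hmn
    subst this; rfl
  | succ n ih =>
    rcases Nat.lt_or_ge m (n + 1) with h | h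
    · have hmn' : m ≤ n := Nat.lt_succ_iff.mp h
      have step : {o | p o (f n o)} = {o | p o (f (n + 1) o)} := by
        ext o
        by_cases hf : f n o = f (n + 1) o
        · simp [Set.mem_setOf_eq, hf]
        · have := hnomatch n o hmn' (Nat.lt_succ_self n) hf
          simp [Set.mem_setOf_eq, this.1, this.2]
      rw [← step]
      exact ih hmn' (fun k o hk hk' => hnomatch k o hk (Nat.lt_succ_of_lt hk'))
    · have : m = n + 1 := Nat.le_antisymm hmn h
      subst this; rfl
end

section
/- Let r be a relation on a type α (the parent-child edge relation of a predicate graph), let L : List α be a topological sort with respect to r, i.e., L.Pairwise (fun a b => ¬ r b a) (no edge goes from a later element to an earlier element), and let S : α → Prop be a decidable predicate that is closed under r-successors: for all a b, if r a b and S a then S b (S contains all descendants of its members). Then the concatenation L.filter (fun a => ¬ S a) ++ L.filter S is again a topological sort with respect to r, i.e., it satisfies Pairwise (fun a b => ¬ r b a). (This is Lemma 2: the concatenation L₁ ++ L₂ produced by the Validation algorithm, where L₂ consists of the invalid predicate nodes together with all their descendants and L₁ is the rest, is a topological sort of the predicate graph G(S).) -/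
theorem List.Pairwise.filter_not_append_filter {α : Type*} {R : α → α → Prop} {L : List α}
    (p : α → Prop) [DecidablePred p] (hL : L.Pairwise R)
    (hcross : ∀ a b, ¬ p a → p b → R a b) :
    (L.filter (fun a => ¬ p a) ++ L.filter (fun a => p a)).Pairwise R := by
  refine List.pairwise_append.2
    ⟨hL.sublist List.filter_sublist, hL.sublist List.filter_sublist, fun a ha b hb => ?_⟩
  exact hcross a b (by simpa using List.of_mem_filter ha) (by simpa using List.of_mem_filter hb)

/-- Lemma 2: the concatenation `L₁ ++ L₂` produced by the Validation algorithm,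
where `L₂` consists of the invalid nodes together with all their descendants
(a set closed under successors) and `L₁` is the rest, is again a topological
sort of the predicate graph. -/
theorem filter_concat_topological_sort {α : Type*} (r : α → α → Prop)
    (L : List α) (S : α → Prop) [DecidablePred S]
    (htopo : L.Pairwise (fun a b => ¬ r b a))
    (hclosed : ∀ a b, r a b → S a → S b) :
    (L.filter (fun a => decide ¬ S a) ++ L.filter (fun a => decide (S a))).Pairwise
      (fun a b => ¬ r b a) :=
  htopo.filter_not_append_filter S fun a b hSa hSb hba => hSa (hclosed b a hba hSb)
end
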